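/- arXiv:2102.11293 — 2 statements merged into one kernel-verified Lean document; each statement's English description precedes it below -/
import Mathlib

section
/- For every natural number n ≥ 2 and every x with 0 ≤ x < n!, there exist bits c_{k,i} ∈ {0,1}, for k ∈ {1,...,n-1} and i ∈ {1,...,⌈log₂ n⌉}, such that x = Σ_{k=1}^{n-1} Σ_{i=1}^{⌈log₂ n⌉} c_{k,i} · ⌈k / 2^{i}⌉ · k!. -/
/-!
Write `x` in the factorial number system, `x = Σ_{k=1}^{n-1} a_k k!` with digits `a_k ≤ k`.
Since `k < n ≤ 2^m` for `m = ⌈log₂ n⌉`, it remains to write each `a ≤ k` as a subset sum of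
`⌈k/2⌉, ⌈k/4⌉, …, ⌈k/2^m⌉`. This goes greedily: use `⌈k/2⌉` if `a ≥ ⌈k/2⌉`; the remainder is
then at most `⌈k/2⌉`, and since `⌈⌈k/2⌉/2^i⌉ = ⌈k/2^(i+1)⌉` the remaining terms are exactly the
sequence for `⌈k/2⌉` with one fewer term.
-/

open Finset Nat

theorem Nat.ceilDiv_ceilDiv (k a b : ℕ) (ha : 0 < a) (hb : 0 < b) :
    k ⌈/⌉ a ⌈/⌉ b = k ⌈/⌉ (a * b) :=
  eq_of_forall_ge_iff fun c => by
    rw [ceilDiv_le_iff_le_mul hb, ceilDiv_le_iff_le_mul ha, ceilDiv_le_iff_le_mul (mul_pos ha hb),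
      mul_assoc]

theorem Int.ceil_natCast_div_natCast_eq_ceilDiv {K : Type*} [Field K] [LinearOrder K]
    [IsStrictOrderedRing K] [FloorRing K] (k d : ℕ) (hd : 0 < d) :
    ⌈(k : K) / d⌉ = ((k ⌈/⌉ d : ℕ) : ℤ) := by
  have hle : k ≤ d * (k ⌈/⌉ d) := (ceilDiv_le_iff_le_mul hd).1 le_rfl
  have hlt : d * (k ⌈/⌉ d) < k + d := by
    have := Nat.div_mul_le_self (k + d - 1) d
    rw [ceilDiv_eq_add_pred_div, mul_comm]
    omega
  have hd' : (0 : K) < d := by exact_mod_cast hd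
  rw [Int.ceil_eq_iff, lt_div_iff₀ hd', div_le_iff₀ hd']
  constructor
  · have : ((d * (k ⌈/⌉ d) : ℕ) : K) < k + d := by exact_mod_cast hlt
    push_cast at this ⊢
    linarith
  · have : (k : K) ≤ ((d * (k ⌈/⌉ d) : ℕ) : K) := by exact_mod_cast hle
    push_cast at this ⊢
    linarith

theorem Finset.sum_Icc_succ' {M : Type*} [AddCommMonoid M] (f : ℕ → M) {a b : ℕ}
    (hab : a ≤ b + 1) : ∑ i ∈ Icc a (b + 1), f i = ∑ i ∈ Icc a b, f (i + 1) + f a := by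
  rw [← sum_Ioc_add_eq_sum_Icc hab, ← Icc_add_one_left_eq_Ioc, ← map_add_right_Icc, sum_map]
  rfl

theorem exists_bits_eq_sum_ceilDiv_two_pow (m : ℕ) :
    ∀ {k a : ℕ}, a ≤ k → k ≤ 2 ^ m → a < 2 ^ m →
      ∃ c : ℕ → ℕ, (∀ i, c i ≤ 1) ∧ a = ∑ i ∈ Icc 1 m, c i * (k ⌈/⌉ 2 ^ i) := by
  induction m with
  | zero =>
    intro k a _ _ ha
    exact ⟨0, fun _ => zero_le _, by simpa using ha⟩
  | succ m ih =>
    intro k a hak hk ha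
    set h := k ⌈/⌉ 2 with h_def
    have hh : h ≤ 2 ^ m := by
      rw [h_def, ceilDiv_le_iff_le_mul two_pos, ← pow_succ']
      exact hk
    obtain ⟨b, hb, a', ha'h, ha'm, rfl⟩ : ∃ b ≤ 1, ∃ a' ≤ h, a' < 2 ^ m ∧ a = b * h + a' := by
      have : h = (k + 1) / 2 := ceilDiv_eq_add_pred_div k 2
      rw [pow_succ] at ha
      by_cases hha : h ≤ a
      · exact ⟨1, le_rfl, a - h, by omega, by omega, by omega⟩
      · exact ⟨0, zero_le _, a, by omega, by omega, by omega⟩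
    obtain ⟨c, hc, rfl⟩ := ih ha'h hh ha'm
    refine ⟨fun i => if i = 1 then b else c (i - 1), fun i => ?_, ?_⟩
    · dsimp only
      split_ifs
      exacts [hb, hc _]
    rw [sum_Icc_succ' _ (by omega), add_comm]
    dsimp only
    rw [if_pos rfl, pow_one]
    congr 1
    refine sum_congr rfl fun i hi => ?_
    rw [if_neg (by have := (mem_Icc.1 hi).1; omega), add_tsub_cancel_right, pow_succ',
      ← Nat.ceilDiv_ceilDiv _ _ _ two_pos (by positivity)]

theorem Nat.mod_factorial_succ_eq_sum (x n : ℕ) :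
    x % (n + 1)! = ∑ k ∈ Icc 1 n, x / k ! % (k + 1) * k ! := by
  induction n with
  | zero => simp [Nat.mod_one]
  | succ n ih =>
    rw [sum_Icc_succ_top (by omega), ← ih, factorial_succ (n + 1), mul_comm (n + 1 + 1), Nat.mod_mul]
    ring

/-- Main lemma of Appendix A: every `x < n!` can be written as
`Σ_{k=1}^{n-1} Σ_{i=1}^{⌈log₂ n⌉} c_{k,i} · ⌈k/2^i⌉ · k!` with bits `c_{k,i}`. -/
theorem stmt12 (n : ℕ) (hn : 2 ≤ n) (x : ℕ) (hx : x < Nat.factorial n) :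
    ∃ c : ℕ → ℕ → ℕ, (∀ k i, c k i ≤ 1) ∧
      (x : ℤ) = ∑ k ∈ Finset.Icc 1 (n - 1), ∑ i ∈ Finset.Icc 1 (Nat.clog 2 n),
        (c k i : ℤ) * ⌈(k : ℝ) / 2 ^ i⌉ * ((Nat.factorial k : ℕ) : ℤ) := by
  set m := Nat.clog 2 n
  have hnm : n ≤ 2 ^ m := Nat.le_pow_clog one_lt_two n
  have hx_digits : x = ∑ k ∈ Icc 1 (n - 1), x / k ! % (k + 1) * k ! := by
    rw [← Nat.mod_factorial_succ_eq_sum, Nat.sub_add_cancel (by omega), Nat.mod_eq_of_lt hx]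
  have bits (k : ℕ) : ∃ b : ℕ → ℕ, (∀ i, b i ≤ 1) ∧
      (k < n → x / k ! % (k + 1) = ∑ i ∈ Icc 1 m, b i * (k ⌈/⌉ 2 ^ i)) := by
    by_cases hk : k < n
    · have hdigit : x / k ! % (k + 1) ≤ k := Nat.lt_succ_iff.mp (Nat.mod_lt _ k.succ_pos)
      obtain ⟨b, hb, hsum⟩ :=
        exists_bits_eq_sum_ceilDiv_two_pow m hdigit (by omega) (by omega)
      exact ⟨b, hb, fun _ => hsum⟩
    · exact ⟨0, fun _ => zero_le _, fun h => absurd h hk⟩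
  choose c hc hc_sum using bits
  refine ⟨c, hc, ?_⟩
  rw [hx_digits, Nat.cast_sum]
  refine sum_congr rfl fun k hk => ?_
  rw [hc_sum k (by have := (mem_Icc.1 hk).2; omega), sum_mul, Nat.cast_sum]
  refine sum_congr rfl fun i _ => ?_
  have hceil := Int.ceil_natCast_div_natCast_eq_ceilDiv (K := ℝ) k (2 ^ i) (by positivity)
  push_cast at hceil ⊢
  rw [hceil]
end

section
/- Let U_0, ..., U_{n-1} be invertible d×d complex matrices satisfying U_j U_k = α_{jk} · U_k U_j for all j, k, with α_{jk} ≠ 0 and α_{kj} = α_{jk}^{-1}. Let σ be a permutation of {0,...,n-1}, let Π := U_{n-1}···U_1 U_0 and Π^r := U_0 U_1···U_{n-1}, and suppose U_{σ(n-1)}···U_{σ(0)} = α · Π for some scalar α. Then the reversed product satisfies U_{σ(0)} U_{σ(1)}···U_{σ(n-1)} = α^{-1} · Π^r. -/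
lemma stmt14_aux {d n : ℕ} (U : Fin n → Matrix (Fin d) (Fin d) ℂ)
    (α' : Fin n → Fin n → ℂ)
    (hinv : ∀ j k, α' k j = (α' j k)⁻¹)
    (hα : ∀ j k, U j * U k = α' j k • (U k * U j))
    {l m : List (Fin n)} (p : l.Perm m) :
    ∃ γ : ℂ, (l.map U).prod = γ • (m.map U).prod ∧
      (l.reverse.map U).prod = γ⁻¹ • (m.reverse.map U).prod := by
  induction p with
  | nil => exact ⟨1, by simp⟩
  | cons a _ ih =>
      obtain ⟨γ, h1, h2⟩ := ih
      refine ⟨γ, ?_, ?_⟩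
      · simp [h1, mul_smul_comm]
      · simp only [List.reverse_cons, List.map_append, List.prod_append, List.map_cons,
          List.map_nil, List.prod_cons, List.prod_nil, mul_one, h2, smul_mul_assoc]
  | swap x y l =>
      refine ⟨α' y x, ?_, ?_⟩
      · simp only [List.map_cons, List.prod_cons, ← mul_assoc, hα y x, smul_mul_assoc]
      · simp only [List.reverse_cons, List.map_append, List.prod_append, List.map_cons,
          List.map_nil, List.prod_cons, List.prod_nil, mul_one, ← hinv y x, mul_assoc,
          hα x y, mul_smul_comm]
  | trans _ _ ih1 ih2 =>
      obtain ⟨γ1, h1, h1'⟩ := ih1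
      obtain ⟨γ2, h2, h2'⟩ := ih2
      exact ⟨γ1 * γ2, by rw [h1, h2, smul_smul], by rw [h1', h2', smul_smul, ← mul_inv]⟩

/-- If a permuted (descending) product carries relative phase `α` with respect
to the descending product `Π`, then the reversed (ascending) permuted product
carries relative phase `α⁻¹` with respect to the ascending product `Πʳ`. -/
theorem stmt14 {d n : ℕ} (U : Fin n → Matrix (Fin d) (Fin d) ℂ)
    (hU : ∀ i, IsUnit (U i))
    (α' : Fin n → Fin n → ℂ)
    (hne : ∀ j k, α' j k ≠ 0)
    (hinv : ∀ j k, α' k j = (α' j k)⁻¹)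
    (hα : ∀ j k, U j * U k = α' j k • (U k * U j))
    (σ : Equiv.Perm (Fin n)) (α : ℂ)
    (h : ((List.finRange n).reverse.map (fun i => U (σ i))).prod
          = α • ((List.finRange n).reverse.map U).prod) :
    ((List.finRange n).map (fun i => U (σ i))).prod
      = α⁻¹ • ((List.finRange n).map U).prod := by
  rcases Nat.eq_zero_or_pos d with hd | hd
  · subst hd; exact Subsingleton.elim _ _
  have hperm : ((List.finRange n).map σ).Perm (List.finRange n) := by
    apply List.perm_of_nodup_nodup_toFinset_eq
    · exact (List.nodup_finRange n).map σ.injective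
    · exact List.nodup_finRange n
    · ext x
      simp only [List.mem_toFinset, List.mem_map, List.mem_finRange, true_and, iff_true]
      exact ⟨σ.symm x, by simp⟩
  obtain ⟨γ, h1, h2⟩ := stmt14_aux U α' hinv hα hperm
  have hrw : ((List.finRange n).reverse.map (fun i => U (σ i)))
      = (((List.finRange n).map σ).reverse.map U) := by
    simp [List.map_reverse, List.map_map, Function.comp]
  have hrw2 : ((List.finRange n).map (fun i => U (σ i)))
      = (((List.finRange n).map σ).map U) := by
    simp [List.map_map, Function.comp]
  rw [hrw] at h
  rw [hrw2, h1]
  -- from h and h2: γ⁻¹ = α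
  rw [h2] at h
  have hMunit : IsUnit ((List.finRange n).reverse.map U).prod := by
    apply List.prod_isUnit
    intro x hx
    simp only [List.mem_map] at hx
    obtain ⟨i, _, rfl⟩ := hx
    exact hU i
  haveI : Nonempty (Fin d) := ⟨⟨0, hd⟩⟩
  haveI : Nontrivial (Matrix (Fin d) (Fin d) ℂ) := inferInstance
  have hMne : ((List.finRange n).reverse.map U).prod ≠ 0 := hMunit.ne_zero
  have : γ⁻¹ = α := by
    have := sub_eq_zero.mpr h
    rw [← sub_smul] at this
    rcases smul_eq_zero.mp this with h0 | h0
    · exact (sub_eq_zero.mp h0)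
    · exact absurd h0 hMne
  rw [← this, inv_inv]
end
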